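/- arXiv:2509.01233 — 9 statements merged into one kernel-verified Lean document; each statement's English description precedes it below -/
import Mathlib

section
/- Let M be an MT-algebra. Then M is a T0-algebra if and only if 𝓑𝓢M join-generates M, i.e., if and only if every a ∈ M satisfies a = ⨆{ x ∈ 𝓑𝓢M | x ≤ a }. -/
/-- An interior operator on a complete Boolean algebra (Kuratowski axioms). -/
structure MTInterior {M : Type*} [CompleteBooleanAlgebra M] (box : M → M) : Prop where
  map_top : box ⊤ = ⊤
  map_inf : ∀ a b : M, box (a ⊓ b) = box a ⊓ box b
  le_self : ∀ a : M, box a ≤ a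
  le_box_box : ∀ a : M, box a ≤ box (box a)

/-- An element is open if it is a fixpoint of the interior operator. -/
def MTOpen {M : Type*} [CompleteBooleanAlgebra M] (box : M → M) (a : M) : Prop :=
  box a = a

/-- An element is closed if its complement is open. -/
def MTClosed {M : Type*} [CompleteBooleanAlgebra M] (box : M → M) (a : M) : Prop :=
  MTOpen box aᶜ

/-- An element is saturated if it is an infimum of a set of open elements. -/
def MTSat {M : Type*} [CompleteBooleanAlgebra M] (box : M → M) (a : M) : Prop :=
  ∃ S : Set M, (∀ s ∈ S, MTOpen box s) ∧ a = sInf S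

/-- An element is locally closed if it is the meet of an open and a closed element. -/
def MTLocClosed {M : Type*} [CompleteBooleanAlgebra M] (box : M → M) (a : M) : Prop :=
  ∃ u c, MTOpen box u ∧ MTClosed box c ∧ a = u ⊓ c

/-- Membership in the Boolean subalgebra `𝓑𝓢M` generated by the saturated elements. -/
inductive MTBS {M : Type*} [CompleteBooleanAlgebra M] (box : M → M) : M → Prop
  | sat (a : M) : MTSat box a → MTBS box a
  | bot : MTBS box ⊥
  | top : MTBS box ⊤
  | inf (a b : M) : MTBS box a → MTBS box b → MTBS box (a ⊓ b)
  | sup (a b : M) : MTBS box a → MTBS box b → MTBS box (a ⊔ b)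
  | compl (a : M) : MTBS box a → MTBS box aᶜ

/-- An MT-algebra is a `T₀`-algebra if every element is a supremum of elements of the
form `s ⊓ c` with `s` saturated and `c` closed. -/
def MTT0 {M : Type*} [CompleteBooleanAlgebra M] (box : M → M) : Prop :=
  ∀ a : M, a = sSup {b | (∃ s c, MTSat box s ∧ MTClosed box c ∧ b = s ⊓ c) ∧ b ≤ a}

section Aux

variable {M : Type*} [CompleteBooleanAlgebra M] {box : M → M}

lemma MT.box_mono (hbox : MTInterior box) {a b : M} (h : a ≤ b) : box a ≤ box b := by
  have hab : a ⊓ b = a := inf_eq_left.mpr h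
  calc box a = box (a ⊓ b) := by rw [hab]
    _ = box a ⊓ box b := hbox.map_inf a b
    _ ≤ box b := inf_le_right

lemma MT.open_sSup (hbox : MTInterior box) {S : Set M} (h : ∀ u ∈ S, MTOpen box u) :
    MTOpen box (sSup S) := by
  refine le_antisymm (hbox.le_self _) (sSup_le fun u hu => ?_)
  rw [← h u hu]; exact MT.box_mono hbox (le_sSup hu)

lemma MT.open_sat {a : M} (h : MTOpen box a) : MTSat box a :=
  ⟨{a}, by simpa using h, by simp⟩

lemma MT.sat_top : MTSat box (⊤ : M) := ⟨∅, by simp, by simp⟩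

lemma MT.open_bot (hbox : MTInterior box) : MTOpen box (⊥ : M) :=
  le_antisymm (hbox.le_self _) bot_le

lemma MT.closed_top (hbox : MTInterior box) : MTClosed box (⊤ : M) := by
  unfold MTClosed; rw [compl_top]; exact MT.open_bot hbox

lemma MT.sat_inf {a b : M} (ha : MTSat box a) (hb : MTSat box b) : MTSat box (a ⊓ b) := by
  obtain ⟨S, hS, rfl⟩ := ha
  obtain ⟨T, hT, rfl⟩ := hb
  exact ⟨S ∪ T, fun u hu => hu.elim (hS u) (hT u), (sInf_union).symm⟩

lemma MT.closed_inf (hbox : MTInterior box) {a b : M} (ha : MTClosed box a)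
    (hb : MTClosed box b) : MTClosed box (a ⊓ b) := by
  unfold MTClosed
  rw [compl_inf, ← sSup_pair]
  exact MT.open_sSup hbox (by rintro u (rfl | rfl) <;> assumption)

/-- Locally closed in the "saturated ⊓ closed" sense. -/
def MTL (box : M → M) (b : M) : Prop :=
  ∃ s c, MTSat box s ∧ MTClosed box c ∧ b = s ⊓ c

lemma MT.L_inf (hbox : MTInterior box) {a b : M} (ha : MTL box a) (hb : MTL box b) :
    MTL box (a ⊓ b) := by
  obtain ⟨s, c, hs, hc, rfl⟩ := ha
  obtain ⟨s', c', hs', hc', rfl⟩ := hb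
  exact ⟨s ⊓ s', c ⊓ c', MT.sat_inf hs hs', MT.closed_inf hbox hc hc', inf_inf_inf_comm _ _ _ _⟩

/-- Elements that are suprema of locally closed elements. -/
def MTD (box : M → M) (x : M) : Prop :=
  ∃ T : Set M, (∀ t ∈ T, MTL box t) ∧ x = sSup T

lemma MT.D_sat {a : M} (ha : MTSat box a) (hbox : MTInterior box) : MTD box a := by
  refine ⟨{a}, ?_, by simp⟩
  intro t ht
  rw [Set.mem_singleton_iff] at ht
  exact ht ▸ ⟨a, ⊤, ha, MT.closed_top hbox, (inf_top_eq a).symm⟩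

lemma MT.D_sat_compl {a : M} (ha : MTSat box a) : MTD box aᶜ := by
  obtain ⟨S, hS, rfl⟩ := ha
  refine ⟨compl '' S, ?_, by rw [compl_sInf, sSup_image]⟩
  rintro t ⟨u, hu, rfl⟩
  refine ⟨⊤, uᶜ, MT.sat_top, ?_, (top_inf_eq _).symm⟩
  unfold MTClosed
  rw [compl_compl]
  exact hS u hu

lemma MT.D_bot : MTD box (⊥ : M) := ⟨∅, by simp, by simp⟩

lemma MT.D_top (hbox : MTInterior box) : MTD box (⊤ : M) := MT.D_sat MT.sat_top hbox

lemma MT.D_sup {a b : M} (ha : MTD box a) (hb : MTD box b) : MTD box (a ⊔ b) := by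
  obtain ⟨T, hT, rfl⟩ := ha
  obtain ⟨T', hT', rfl⟩ := hb
  exact ⟨T ∪ T', fun t ht => ht.elim (hT t) (hT' t), (sSup_union).symm⟩

lemma MT.D_inf (hbox : MTInterior box) {a b : M} (ha : MTD box a) (hb : MTD box b) :
    MTD box (a ⊓ b) := by
  obtain ⟨T, hT, rfl⟩ := ha
  obtain ⟨T', hT', rfl⟩ := hb
  refine ⟨Set.image2 (· ⊓ ·) T T', ?_, ?_⟩
  · rintro t ⟨x, hx, y, hy, rfl⟩
    exact MT.L_inf hbox (hT x hx) (hT' y hy)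
  · refine le_antisymm ?_ (sSup_le ?_)
    · rw [sSup_inf_sSup]
      refine iSup₂_le fun p hp => le_sSup ⟨p.1, hp.1, p.2, hp.2, rfl⟩
    · rintro t ⟨x, hx, y, hy, rfl⟩
      exact inf_le_inf (le_sSup hx) (le_sSup hy)

lemma MT.BS_D (hbox : MTInterior box) {x : M} (hx : MTBS box x) : MTD box x ∧ MTD box xᶜ := by
  induction hx with
  | sat a ha => exact ⟨MT.D_sat ha hbox, MT.D_sat_compl ha⟩
  | bot => exact ⟨MT.D_bot, by rw [compl_bot]; exact MT.D_top hbox⟩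
  | top => exact ⟨MT.D_top hbox, by rw [compl_top]; exact MT.D_bot⟩
  | inf a b _ _ iha ihb =>
    exact ⟨MT.D_inf hbox iha.1 ihb.1, by rw [compl_inf]; exact MT.D_sup iha.2 ihb.2⟩
  | sup a b _ _ iha ihb =>
    exact ⟨MT.D_sup iha.1 ihb.1, by rw [compl_sup]; exact MT.D_inf hbox iha.2 ihb.2⟩
  | compl a _ iha => exact ⟨iha.2, by rw [compl_compl]; exact iha.1⟩

lemma MT.L_BS {b : M} (hb : MTL box b) : MTBS box b := by
  obtain ⟨s, c, hs, hc, rfl⟩ := hb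
  refine MTBS.inf s c (MTBS.sat s hs) ?_
  have : MTBS box cᶜᶜ := MTBS.compl cᶜ (MTBS.sat cᶜ (MT.open_sat hc))
  rwa [compl_compl] at this

end Aux

/-- An MT-algebra `M` is a `T₀`-algebra iff `𝓑𝓢M` join-generates `M`. -/
theorem stmt_0 {M : Type*} [CompleteBooleanAlgebra M] (box : M → M) (hbox : MTInterior box) :
    MTT0 box ↔ ∀ a : M, a = sSup {x | MTBS box x ∧ x ≤ a} := by
  constructor
  · intro h a
    refine le_antisymm ?_ (sSup_le fun b hb => hb.2)
    conv_lhs => rw [h a]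
    refine sSup_le fun b hb => le_sSup ⟨MT.L_BS hb.1, hb.2⟩
  · intro h a
    refine le_antisymm ?_ (sSup_le fun b hb => hb.2)
    conv_lhs => rw [h a]
    refine sSup_le fun x hx => ?_
    obtain ⟨T, hT, rfl⟩ := (MT.BS_D hbox hx.1).1
    exact sSup_le fun t ht => le_sSup ⟨hT t ht, le_trans (le_sSup ht) hx.2⟩
end

section
/- Let f : M → M′ be a Raney morphism between MT-algebras. Then f(xᶜ) = f(x)ᶜ for every saturated element x of M. -/
/-- A Raney morphism between MT-algebras. -/
structure MTRaneyHom {M M' : Type*} [CompleteBooleanAlgebra M] [CompleteBooleanAlgebra M']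
    (box : M → M) (box' : M' → M') (f : M → M') : Prop where
  sat_map : ∀ a : M, MTSat box a → MTSat box' (f a)
  sat_sup : ∀ a b : M, MTSat box a → MTSat box b → f (a ⊔ b) = f a ⊔ f b
  map_bot : f ⊥ = ⊥
  sat_sInf : ∀ S : Set M, (∀ s ∈ S, MTSat box s) → f (sInf S) = sInf (f '' S)
  open_map : ∀ a : M, MTOpen box a → MTOpen box' (f a)
  map_top : f ⊤ = ⊤
  open_sSup : ∀ S : Set M, (∀ s ∈ S, MTOpen box s) → f (sSup S) = sSup (f '' S)
  map_inf : ∀ a b : M, f (a ⊓ b) = f a ⊓ f b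
  bs_sup : ∀ x y : M, MTBS box x → MTBS box y → f (x ⊔ y) = f x ⊔ f y
  approx : ∀ a : M, f a = sSup (f '' {x | MTBS box x ∧ x ≤ a})

/-- A Raney morphism preserves complements of saturated elements. -/
theorem stmt_3 {M M' : Type*} [CompleteBooleanAlgebra M] [CompleteBooleanAlgebra M']
    (box : M → M) (box' : M' → M') (hbox : MTInterior box) (hbox' : MTInterior box')
    (f : M → M') (hf : MTRaneyHom box box' f) :
    ∀ x : M, MTSat box x → f xᶜ = (f x)ᶜ := by
  intro x hx
  have hbs : MTBS box x := MTBS.sat x hx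
  have hsup : f (x ⊔ xᶜ) = f x ⊔ f xᶜ := hf.bs_sup x xᶜ hbs (MTBS.compl x hbs)
  have hinf : f (x ⊓ xᶜ) = f x ⊓ f xᶜ := hf.map_inf x xᶜ
  rw [sup_compl_eq_top, hf.map_top] at hsup
  rw [inf_compl_eq_bot, hf.map_bot] at hinf
  exact (IsCompl.of_eq hinf.symm hsup.symm).compl_eq.symm
end

section
/- Let f : M → M′ be a Raney morphism between MT-algebras. Then f maps 𝓑𝓢M into 𝓑𝓢M′, and the restriction of f to 𝓑𝓢M is a Boolean algebra homomorphism into 𝓑𝓢M′: it preserves ⊥, ⊤, binary infima, binary suprema, and complements of elements of 𝓑𝓢M. -/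
/-- A Raney morphism maps `𝓑𝓢M` into `𝓑𝓢M'` and restricts to a Boolean
algebra homomorphism on `𝓑𝓢M`. -/
theorem stmt_4 {M M' : Type*} [CompleteBooleanAlgebra M] [CompleteBooleanAlgebra M']
    (box : M → M) (box' : M' → M') (hbox : MTInterior box) (hbox' : MTInterior box')
    (f : M → M') (hf : MTRaneyHom box box' f) :
    (∀ x : M, MTBS box x → MTBS box' (f x)) ∧
    f ⊥ = ⊥ ∧ f ⊤ = ⊤ ∧
    (∀ x y : M, MTBS box x → MTBS box y → f (x ⊓ y) = f x ⊓ f y) ∧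
    (∀ x y : M, MTBS box x → MTBS box y → f (x ⊔ y) = f x ⊔ f y) ∧
    (∀ x : M, MTBS box x → f xᶜ = (f x)ᶜ) := by
  have hcompl : ∀ x : M, MTBS box x → f xᶜ = (f x)ᶜ := by
    intro x hx
    have h1 : f x ⊓ f xᶜ = ⊥ := by
      rw [← hf.map_inf, inf_compl_eq_bot, hf.map_bot]
    have h2 : f x ⊔ f xᶜ = ⊤ := by
      rw [← hf.bs_sup x xᶜ hx (MTBS.compl x hx), sup_compl_eq_top, hf.map_top]
    have : IsCompl (f x) (f xᶜ) :=
      isCompl_iff.mpr ⟨disjoint_iff.mpr h1, codisjoint_iff.mpr h2⟩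
    exact this.compl_eq.symm
  refine ⟨?_, hf.map_bot, hf.map_top, fun x y _ _ => hf.map_inf x y, hf.bs_sup, hcompl⟩
  intro x hx
  induction hx with
  | sat a ha => exact MTBS.sat _ (hf.sat_map a ha)
  | bot => rw [hf.map_bot]; exact MTBS.bot
  | top => rw [hf.map_top]; exact MTBS.top
  | inf a b ha hb iha ihb => rw [hf.map_inf]; exact MTBS.inf _ _ iha ihb
  | sup a b ha hb iha ihb => rw [hf.bs_sup a b ha hb]; exact MTBS.sup _ _ iha ihb
  | compl a ha iha => rw [hcompl a ha]; exact MTBS.compl _ iha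
end

section
/- Let f : M → M′ be a Raney morphism between MT-algebras. If x ∈ M is locally closed, then f(x) is locally closed in M′. -/
theorem MTOpen.mtSat {M : Type*} [CompleteBooleanAlgebra M] {box : M → M} {a : M}
    (ha : MTOpen box a) : MTSat box a :=
  ⟨{a}, by simpa using ha, sInf_singleton.symm⟩

theorem MTBS.of_compl {M : Type*} [CompleteBooleanAlgebra M] {box : M → M} {a : M}
    (ha : MTBS box aᶜ) : MTBS box a := by
  simpa using MTBS.compl _ ha

namespace MTRaneyHom

variable {M M' : Type*} [CompleteBooleanAlgebra M] [CompleteBooleanAlgebra M']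
  {box : M → M} {box' : M' → M'} {f : M → M'}

theorem map_compl_of_mtBS (hf : MTRaneyHom box box' f) {a : M} (ha : MTBS box a) :
    f aᶜ = (f a)ᶜ := by
  refine (IsCompl.compl_eq ⟨disjoint_iff.mpr ?_, codisjoint_iff.mpr ?_⟩).symm
  · rw [← hf.map_inf, inf_compl_eq_bot, hf.map_bot]
  · rw [← hf.bs_sup _ _ ha (ha.compl _), sup_compl_eq_top, hf.map_top]

theorem map_closed (hf : MTRaneyHom box box' f) {c : M} (hc : MTClosed box c) :
    MTClosed box' (f c) := by
  have hc_bs : MTBS box c := MTBS.of_compl (MTBS.sat _ hc.mtSat)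
  rw [MTClosed, ← hf.map_compl_of_mtBS hc_bs]
  exact hf.open_map _ hc

end MTRaneyHom

theorem stmt_5_general {M M' : Type*} [CompleteBooleanAlgebra M] [CompleteBooleanAlgebra M']
    (box : M → M) (box' : M' → M')
    (f : M → M') (hf : MTRaneyHom box box' f) :
    ∀ x : M, MTLocClosed box x → MTLocClosed box' (f x) := by
  rintro x ⟨u, c, hu, hc, rfl⟩
  exact ⟨f u, f c, hf.open_map _ hu, hf.map_closed hc, hf.map_inf _ _⟩

/-- A Raney morphism maps locally closed elements to locally closed elements. -/
theorem stmt_5 {M M' : Type*} [CompleteBooleanAlgebra M] [CompleteBooleanAlgebra M']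
    (box : M → M) (box' : M' → M') (hbox : MTInterior box) (hbox' : MTInterior box')
    (f : M → M') (hf : MTRaneyHom box box' f) :
    ∀ x : M, MTLocClosed box x → MTLocClosed box' (f x) :=
  stmt_5_general box box' f hf
end

section
/- Let M, M′ be MT-algebras and let f : M → M′ be a map satisfying conditions (R1), (R2), (R3), and (R5) of the definition of Raney morphism. Write a ≺ b for the relation on M given by ∃ x ∈ 𝓑𝓢M with a ≤ x ≤ b, and a ≺′ b for the analogous relation on M′ with respect to 𝓑𝓢M′. Then the following are equivalent: (1) f(x ⊔ y) = f(x) ⊔ f(y) for all x, y ∈ 𝓑𝓢M (condition (R4)); (2) for all a₁, b₁, a₂, b₂ ∈ M, a₁ ≺ b₁ and a₂ ≺ b₂ imply f(a₁ ⊔ a₂) ≺′ f(b₁) ⊔ f(b₂); (3) for all a, b ∈ M, a ≺ b implies (f(aᶜ))ᶜ ≺′ f(b). -/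
/-- The relation `≺` on an MT-algebra: `a ≺ c` iff there is `x ∈ 𝓑𝓢M` with `a ≤ x ≤ c`. -/
def mtPrec {M : Type*} [CompleteBooleanAlgebra M] (box : M → M) (a c : M) : Prop :=
  ∃ x, MTBS box x ∧ a ≤ x ∧ x ≤ c

/-- for a map satisfying (R1), (R2), (R3), (R5), condition (R4) is equivalent
to the two proximity-type conditions. -/
theorem stmt_6 {M M' : Type*} [CompleteBooleanAlgebra M] [CompleteBooleanAlgebra M']
    (box : M → M) (box' : M' → M') (hbox : MTInterior box) (hbox' : MTInterior box')
    (f : M → M')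
    (r1_sat : ∀ a : M, MTSat box a → MTSat box' (f a))
    (r1_sup : ∀ a b : M, MTSat box a → MTSat box b → f (a ⊔ b) = f a ⊔ f b)
    (r1_bot : f ⊥ = ⊥)
    (r1_sInf : ∀ S : Set M, (∀ s ∈ S, MTSat box s) → f (sInf S) = sInf (f '' S))
    (r2_open : ∀ a : M, MTOpen box a → MTOpen box' (f a))
    (r2_top : f ⊤ = ⊤)
    (r2_sSup : ∀ S : Set M, (∀ s ∈ S, MTOpen box s) → f (sSup S) = sSup (f '' S))
    (r3 : ∀ a b : M, f (a ⊓ b) = f a ⊓ f b)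
    (r5 : ∀ a : M, f a = sSup (f '' {x | MTBS box x ∧ x ≤ a})) :
    ((∀ x y : M, MTBS box x → MTBS box y → f (x ⊔ y) = f x ⊔ f y) ↔
      (∀ a₁ b₁ a₂ b₂ : M, mtPrec box a₁ b₁ → mtPrec box a₂ b₂ →
        mtPrec box' (f (a₁ ⊔ a₂)) (f b₁ ⊔ f b₂))) ∧
    ((∀ a₁ b₁ a₂ b₂ : M, mtPrec box a₁ b₁ → mtPrec box a₂ b₂ →
        mtPrec box' (f (a₁ ⊔ a₂)) (f b₁ ⊔ f b₂)) ↔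
      (∀ a b : M, mtPrec box a b → mtPrec box' (f aᶜ)ᶜ (f b))) := by

  have mono : ∀ a b : M, a ≤ b → f a ≤ f b := by
    intro a b hab
    have h : f (a ⊓ b) = f a ⊓ f b := r3 a b
    rw [inf_eq_left.mpr hab] at h
    rw [h]; exact inf_le_right
  have compl4 : (∀ x y : M, MTBS box x → MTBS box y → f (x ⊔ y) = f x ⊔ f y) →
      ∀ x : M, MTBS box x → f xᶜ = (f x)ᶜ := by
    intro h4 x hx
    have hinf : f x ⊓ f xᶜ = ⊥ := by rw [← r3, inf_compl_eq_bot, r1_bot]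
    have hsup : f x ⊔ f xᶜ = ⊤ := by
      rw [← h4 x xᶜ hx (MTBS.compl x hx), sup_compl_eq_top, r2_top]
    exact (compl_unique hinf hsup).symm
  have bs4 : (∀ x y : M, MTBS box x → MTBS box y → f (x ⊔ y) = f x ⊔ f y) →
      ∀ x : M, MTBS box x → MTBS box' (f x) := by
    intro h4 x hx
    induction hx with
    | sat a ha => exact MTBS.sat _ (r1_sat a ha)
    | bot => rw [r1_bot]; exact MTBS.bot
    | top => rw [r2_top]; exact MTBS.top
    | inf a b _ _ iha ihb => rw [r3]; exact MTBS.inf _ _ iha ihb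
    | sup a b ha hb iha ihb => rw [h4 a b ha hb]; exact MTBS.sup _ _ iha ihb
    | compl a ha iha => rw [compl4 h4 a ha]; exact MTBS.compl _ iha
  have one2 : (∀ x y : M, MTBS box x → MTBS box y → f (x ⊔ y) = f x ⊔ f y) →
      (∀ a₁ b₁ a₂ b₂ : M, mtPrec box a₁ b₁ → mtPrec box a₂ b₂ →
        mtPrec box' (f (a₁ ⊔ a₂)) (f b₁ ⊔ f b₂)) := by
    rintro h4 a₁ b₁ a₂ b₂ ⟨x₁, hx₁, ha₁, hb₁⟩ ⟨x₂, hx₂, ha₂, hb₂⟩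
    refine ⟨f (x₁ ⊔ x₂), bs4 h4 _ (MTBS.sup _ _ hx₁ hx₂),
      mono _ _ (sup_le_sup ha₁ ha₂), ?_⟩
    rw [h4 _ _ hx₁ hx₂]
    exact sup_le_sup (mono _ _ hb₁) (mono _ _ hb₂)
  have two1 : (∀ a₁ b₁ a₂ b₂ : M, mtPrec box a₁ b₁ → mtPrec box a₂ b₂ →
        mtPrec box' (f (a₁ ⊔ a₂)) (f b₁ ⊔ f b₂)) →
      (∀ x y : M, MTBS box x → MTBS box y → f (x ⊔ y) = f x ⊔ f y) := by
    intro h2 x y hx hy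
    obtain ⟨z, _, h1, h2'⟩ := h2 x x y y ⟨x, hx, le_rfl, le_rfl⟩ ⟨y, hy, le_rfl, le_rfl⟩
    exact le_antisymm (le_trans h1 h2')
      (sup_le (mono _ _ le_sup_left) (mono _ _ le_sup_right))
  have one3 : (∀ x y : M, MTBS box x → MTBS box y → f (x ⊔ y) = f x ⊔ f y) →
      (∀ a b : M, mtPrec box a b → mtPrec box' (f aᶜ)ᶜ (f b)) := by
    rintro h4 a b ⟨x, hx, hax, hxb⟩
    refine ⟨f x, bs4 h4 _ hx, ?_, mono _ _ hxb⟩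
    calc (f aᶜ)ᶜ ≤ (f xᶜ)ᶜ := compl_le_compl (mono _ _ (compl_le_compl hax))
      _ = f x := by rw [compl4 h4 x hx, compl_compl]
  have compl3 : (∀ a b : M, mtPrec box a b → mtPrec box' (f aᶜ)ᶜ (f b)) →
      ∀ x : M, MTBS box x → f xᶜ = (f x)ᶜ := by
    intro h3 x hx
    obtain ⟨w, _, h1, h2⟩ := h3 x x ⟨x, hx, le_rfl, le_rfl⟩
    have hle : (f xᶜ)ᶜ ≤ f x := le_trans h1 h2
    have hinf : f x ⊓ f xᶜ = ⊥ := by rw [← r3, inf_compl_eq_bot, r1_bot]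
    have h1' : f xᶜ ≤ (f x)ᶜ :=
      le_compl_iff_disjoint_right.mpr (disjoint_iff.mpr (by rw [inf_comm]; exact hinf))
    have h2' : (f x)ᶜ ≤ f xᶜ := by
      have := compl_le_compl hle
      rwa [compl_compl] at this
    exact le_antisymm h1' h2'
  have three1 : (∀ a b : M, mtPrec box a b → mtPrec box' (f aᶜ)ᶜ (f b)) →
      (∀ x y : M, MTBS box x → MTBS box y → f (x ⊔ y) = f x ⊔ f y) := by
    intro h3 x y hx hy
    refine le_antisymm ?_ (sup_le (mono _ _ le_sup_left) (mono _ _ le_sup_right))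
    rw [r5 (x ⊔ y)]
    apply sSup_le
    rintro _ ⟨z, ⟨hz, hzle⟩, rfl⟩
    have hz0 : z ⊓ (x ⊔ y)ᶜ = ⊥ :=
      le_bot_iff.mp (le_trans (inf_le_inf_right _ hzle) (le_of_eq inf_compl_eq_bot))
    have key : f z ⊓ (f x ⊔ f y)ᶜ = ⊥ := by
      rw [compl_sup, ← compl3 h3 x hx, ← compl3 h3 y hy, ← r3, ← r3, ← compl_sup,
        hz0, r1_bot]
    rw [← sdiff_eq] at key
    exact sdiff_eq_bot_iff.mp key
  refine ⟨⟨one2, two1⟩, ⟨fun h2 => one3 (two1 h2), fun h3 => one2 (three1 h3)⟩⟩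
end

section
/- Let f : M₁ → M₂, g : M₂ → M₃, and h : M₃ → M₄ be Raney morphisms between MT-algebras, and define (g ⋆ f)(a) = ⨆{ g(f(x)) | x ∈ 𝓑𝓢M₁, x ≤ a } (and similarly for the other compositions). Then for every a ∈ M₁, ((h ⋆ g) ⋆ f)(a) = ⨆{ h(g(f(x))) | x ∈ 𝓑𝓢M₁, x ≤ a } = (h ⋆ (g ⋆ f))(a). -/
/-- The identity Raney morphism `id_M`. -/
def raneyId {M : Type*} [CompleteBooleanAlgebra M] (box : M → M) (a : M) : M :=
  sSup {x | MTBS box x ∧ x ≤ a}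

/-- The composition `g ⋆ f` of Raney morphisms. -/
def raneyComp {M₁ M₂ M₃ : Type*} [CompleteBooleanAlgebra M₁] [CompleteBooleanAlgebra M₂]
    [CompleteBooleanAlgebra M₃] (box₁ : M₁ → M₁) (g : M₂ → M₃) (f : M₁ → M₂) (a : M₁) : M₃ :=
  sSup ((fun x => g (f x)) '' {x | MTBS box₁ x ∧ x ≤ a})

section Aux

variable {M M' : Type*} [CompleteBooleanAlgebra M] [CompleteBooleanAlgebra M']
  {box : M → M} {box' : M' → M'} {f : M → M'}

lemma raney_mono (hf : MTRaneyHom box box' f) : Monotone f := by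
  intro a b hab
  have h := hf.map_inf a b
  rw [inf_eq_left.mpr hab] at h
  rw [h]; exact inf_le_right

lemma raney_compl (hf : MTRaneyHom box box' f) {x : M} (hx : MTBS box x) :
    f xᶜ = (f x)ᶜ := by
  have hsup : f x ⊔ f xᶜ = ⊤ := by
    rw [← hf.bs_sup x xᶜ hx (MTBS.compl x hx), sup_compl_eq_top, hf.map_top]
  have hinf : f x ⊓ f xᶜ = ⊥ := by
    rw [← hf.map_inf, inf_compl_eq_bot, hf.map_bot]
  have : IsCompl (f x) (f xᶜ) := ⟨disjoint_iff.mpr hinf, codisjoint_iff.mpr hsup⟩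
  exact (IsCompl.eq_compl this.symm).symm ▸ rfl

lemma raney_bs (hf : MTRaneyHom box box' f) {x : M} (hx : MTBS box x) :
    MTBS box' (f x) := by
  induction hx with
  | sat a ha => exact MTBS.sat _ (hf.sat_map a ha)
  | bot => rw [hf.map_bot]; exact MTBS.bot
  | top => rw [hf.map_top]; exact MTBS.top
  | inf a b ha hb iha ihb => rw [hf.map_inf]; exact MTBS.inf _ _ iha ihb
  | sup a b ha hb iha ihb => rw [hf.bs_sup a b ha hb]; exact MTBS.sup _ _ iha ihb
  | compl a ha iha => rw [raney_compl hf ha]; exact MTBS.compl _ iha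

end Aux

lemma raneyComp_bs {M₁ M₂ M₃ : Type*} [CompleteBooleanAlgebra M₁] [CompleteBooleanAlgebra M₂]
    [CompleteBooleanAlgebra M₃] {box₁ : M₁ → M₁} {box₂ : M₂ → M₂} {box₃ : M₃ → M₃}
    {f : M₁ → M₂} {g : M₂ → M₃}
    (hg : MTRaneyHom box₂ box₃ g) (hf : MTRaneyHom box₁ box₂ f)
    {x : M₁} (hx : MTBS box₁ x) : raneyComp box₁ g f x = g (f x) := by
  apply le_antisymm
  · apply sSup_le
    rintro _ ⟨y, ⟨hy, hyx⟩, rfl⟩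
    exact (raney_mono hg) ((raney_mono hf) hyx)
  · exact le_sSup ⟨x, ⟨hx, le_rfl⟩, rfl⟩

/-- associativity of the composition `⋆` of Raney morphisms. -/
theorem stmt_7 {M₁ M₂ M₃ M₄ : Type*} [CompleteBooleanAlgebra M₁] [CompleteBooleanAlgebra M₂]
    [CompleteBooleanAlgebra M₃] [CompleteBooleanAlgebra M₄]
    (box₁ : M₁ → M₁) (box₂ : M₂ → M₂) (box₃ : M₃ → M₃) (box₄ : M₄ → M₄)
    (hbox₁ : MTInterior box₁) (hbox₂ : MTInterior box₂)
    (hbox₃ : MTInterior box₃) (hbox₄ : MTInterior box₄)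
    (f : M₁ → M₂) (g : M₂ → M₃) (h : M₃ → M₄)
    (hf : MTRaneyHom box₁ box₂ f) (hg : MTRaneyHom box₂ box₃ g)
    (hh : MTRaneyHom box₃ box₄ h) :
    ∀ a : M₁,
      raneyComp box₁ (raneyComp box₂ h g) f a
          = sSup ((fun x => h (g (f x))) '' {x | MTBS box₁ x ∧ x ≤ a}) ∧
      raneyComp box₁ (raneyComp box₂ h g) f a
          = raneyComp box₁ h (raneyComp box₁ g f) a := by
  intro a
  have h1 : raneyComp box₁ (raneyComp box₂ h g) f a
      = sSup ((fun x => h (g (f x))) '' {x | MTBS box₁ x ∧ x ≤ a}) := by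
    unfold raneyComp
    congr 1
    exact Set.image_congr fun x hx => raneyComp_bs hh hg (raney_bs hf hx.1)
  refine ⟨h1, h1.trans ?_⟩
  unfold raneyComp
  congr 1
  exact Set.image_congr fun x hx => (congrArg h (raneyComp_bs hg hf hx.1)).symm
end

section
/- Let M be an MT-algebra and define id_M : M → M by id_M(a) = ⨆{ x ∈ 𝓑𝓢M | x ≤ a }. Then id_M is a Raney morphism. -/
lemma raneyId_le {M : Type*} [CompleteBooleanAlgebra M] (box : M → M) (a : M) :
    raneyId box a ≤ a :=
  sSup_le fun _ hx => hx.2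

lemma raneyId_of_bs {M : Type*} [CompleteBooleanAlgebra M] (box : M → M) {a : M}
    (ha : MTBS box a) : raneyId box a = a :=
  le_antisymm (raneyId_le box a) (le_sSup ⟨ha, le_rfl⟩)

lemma raneyId_mono {M : Type*} [CompleteBooleanAlgebra M] (box : M → M) {a b : M}
    (h : a ≤ b) : raneyId box a ≤ raneyId box b :=
  sSup_le_sSup fun x hx => ⟨hx.1, hx.2.trans h⟩

lemma mtSat_sInf {M : Type*} [CompleteBooleanAlgebra M] (box : M → M) (S : Set M)
    (h : ∀ s ∈ S, MTSat box s) : MTSat box (sInf S) := by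
  refine ⟨{u | MTOpen box u ∧ sInf S ≤ u}, fun u hu => hu.1,
    le_antisymm (le_sInf fun u hu => hu.2) ?_⟩
  refine le_sInf fun s hs => ?_
  obtain ⟨T, hT, rfl⟩ := h s hs
  exact le_sInf fun t ht => sInf_le ⟨hT t ht, (sInf_le hs).trans (sInf_le ht)⟩

lemma mtBox_mono {M : Type*} [CompleteBooleanAlgebra M] {box : M → M}
    (hbox : MTInterior box) {a b : M} (h : a ≤ b) : box a ≤ box b := by
  have : a ⊓ b = a := inf_eq_left.mpr h
  calc box a = box (a ⊓ b) := by rw [this]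
    _ = box a ⊓ box b := hbox.map_inf a b
    _ ≤ box b := inf_le_right

lemma mtOpen_sSup {M : Type*} [CompleteBooleanAlgebra M] {box : M → M}
    (hbox : MTInterior box) (S : Set M) (h : ∀ s ∈ S, MTOpen box s) :
    MTOpen box (sSup S) := by
  refine le_antisymm (hbox.le_self _) (sSup_le fun s hs => ?_)
  calc s = box s := (h s hs).symm
    _ ≤ box (sSup S) := mtBox_mono hbox (le_sSup hs)

/-- `id_M` is a Raney morphism. -/
theorem stmt_9 {M : Type*} [CompleteBooleanAlgebra M] (box : M → M) (hbox : MTInterior box) :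
    MTRaneyHom box box (raneyId box) := by
  have hopen_bs : ∀ a : M, MTOpen box a → MTBS box a := fun a ha =>
    MTBS.sat a ⟨{a}, by simpa using ha, by simp⟩
  constructor
  · intro a ha
    rw [raneyId_of_bs box (MTBS.sat a ha)]; exact ha
  · intro a b ha hb
    have h : MTBS box (a ⊔ b) := MTBS.sup a b (MTBS.sat a ha) (MTBS.sat b hb)
    rw [raneyId_of_bs box h, raneyId_of_bs box (MTBS.sat a ha),
      raneyId_of_bs box (MTBS.sat b hb)]
  · exact raneyId_of_bs box MTBS.bot
  · intro S hS
    rw [raneyId_of_bs box (MTBS.sat _ (mtSat_sInf box S hS))]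
    have : raneyId box '' S = S := by
      ext x
      constructor
      · rintro ⟨y, hy, rfl⟩
        rwa [raneyId_of_bs box (MTBS.sat y (hS y hy))]
      · intro hx
        exact ⟨x, hx, raneyId_of_bs box (MTBS.sat x (hS x hx))⟩
    rw [this]
  · intro a ha
    rwa [raneyId_of_bs box (hopen_bs a ha)]
  · exact raneyId_of_bs box MTBS.top
  · intro S hS
    rw [raneyId_of_bs box (hopen_bs _ (mtOpen_sSup hbox S hS))]
    have : raneyId box '' S = S := by
      ext x
      constructor
      · rintro ⟨y, hy, rfl⟩
        rwa [raneyId_of_bs box (hopen_bs y (hS y hy))]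
      · intro hx
        exact ⟨x, hx, raneyId_of_bs box (hopen_bs x (hS x hx))⟩
    rw [this]
  · intro a b
    refine le_antisymm (le_inf (raneyId_mono box inf_le_left)
      (raneyId_mono box inf_le_right)) ?_
    rw [raneyId, raneyId, sSup_inf_sSup]
    refine iSup_le fun p => iSup_le fun hp => ?_
    exact le_sSup ⟨MTBS.inf _ _ hp.1.1 hp.2.1, inf_le_inf hp.1.2 hp.2.2⟩
  · intro x y hx hy
    rw [raneyId_of_bs box (MTBS.sup x y hx hy), raneyId_of_bs box hx, raneyId_of_bs box hy]
  · intro a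
    refine le_antisymm (sSup_le fun x hx => le_sSup ⟨x, hx, raneyId_of_bs box hx.1⟩) ?_
    refine sSup_le ?_
    rintro _ ⟨x, hx, rfl⟩
    rw [raneyId_of_bs box hx.1]
    exact le_sSup hx
end

section
/- Let f : M → M′ be a Raney morphism between MT-algebras, and define f̂ : M → M′ by f̂(a) = ⨆{ f(x) | x locally closed in M, x ≤ a }. Then f̂ is a proximity morphism. -/
/-- A proximity morphism between MT-algebras. -/
structure MTProxHom {M M' : Type*} [CompleteBooleanAlgebra M] [CompleteBooleanAlgebra M']
    (box : M → M) (box' : M' → M') (h : M → M') : Prop where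
  open_map : ∀ a : M, MTOpen box a → MTOpen box' (h a)
  map_top : h ⊤ = ⊤
  open_inf : ∀ u v : M, MTOpen box u → MTOpen box v → h (u ⊓ v) = h u ⊓ h v
  open_sSup : ∀ S : Set M, (∀ s ∈ S, MTOpen box s) → h (sSup S) = sSup (h '' S)
  map_inf : ∀ a b : M, h (a ⊓ b) = h a ⊓ h b
  lc_finsup : ∀ S : Set M, S.Finite → (∀ x ∈ S, MTLocClosed box x) →
    h (sSup S) = sSup (h '' S)
  approx : ∀ a : M, h a = sSup (h '' {x | MTLocClosed box x ∧ x ≤ a})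

/-- The map `f̂` associated to a Raney morphism `f`. -/
def mtHat {M M' : Type*} [CompleteBooleanAlgebra M] [CompleteBooleanAlgebra M']
    (box : M → M) (f : M → M') (a : M) : M' :=
  sSup (f '' {x | MTLocClosed box x ∧ x ≤ a})

/-!
`f` is monotone, so `f̂` agrees with `f` on locally closed elements, in particular on open ones;
hence (P1) is inherited from (R2) and (R3), and (P4) holds by construction. Locally closed
elements are closed under finite meets, which gives (P2). For (P3), a locally closed `z` below a
finite join `⨆ S` of locally closed elements is the finite join of the locally closed elements
`z ⊓ s`, which lie in `𝓑𝓢M`, where `f` preserves finite joins by (R4).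
-/

section

variable {M M' : Type*} [CompleteBooleanAlgebra M] [CompleteBooleanAlgebra M']
variable {box : M → M} {box' : M' → M'} {f : M → M'}

namespace MTInterior

variable (hbox : MTInterior box)
include hbox

theorem monotone : Monotone box := fun a b hab => by
  rw [← inf_eq_left.mpr hab, hbox.map_inf]
  exact inf_le_right

theorem mtOpen_bot : MTOpen box (⊥ : M) :=
  le_antisymm (hbox.le_self ⊥) bot_le

theorem mtClosed_top : MTClosed box (⊤ : M) := by
  rw [MTClosed, compl_top]
  exact hbox.mtOpen_bot

theorem mtOpen_inf {a b : M} (ha : MTOpen box a) (hb : MTOpen box b) : MTOpen box (a ⊓ b) := by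
  rw [MTOpen, hbox.map_inf, ha, hb]

theorem mtOpen_sSup {S : Set M} (hS : ∀ s ∈ S, MTOpen box s) : MTOpen box (sSup S) :=
  le_antisymm (hbox.le_self _) <| sSup_le fun s hs => hS s hs ▸ hbox.monotone (le_sSup hs)

theorem mtOpen_sup {a b : M} (ha : MTOpen box a) (hb : MTOpen box b) : MTOpen box (a ⊔ b) := by
  rw [← sSup_pair]
  exact hbox.mtOpen_sSup (by rintro s (rfl | rfl) <;> assumption)

theorem mtClosed_inf {a b : M} (ha : MTClosed box a) (hb : MTClosed box b) :
    MTClosed box (a ⊓ b) := by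
  rw [MTClosed, compl_inf]
  exact hbox.mtOpen_sup ha hb

theorem mtLocClosed_of_mtOpen {u : M} (hu : MTOpen box u) : MTLocClosed box u :=
  ⟨u, ⊤, hu, hbox.mtClosed_top, (inf_top_eq u).symm⟩

theorem mtLocClosed_inf {a b : M} (ha : MTLocClosed box a) (hb : MTLocClosed box b) :
    MTLocClosed box (a ⊓ b) := by
  obtain ⟨u, c, hu, hc, rfl⟩ := ha
  obtain ⟨v, d, hv, hd, rfl⟩ := hb
  exact ⟨u ⊓ v, c ⊓ d, hbox.mtOpen_inf hu hv, hbox.mtClosed_inf hc hd, inf_inf_inf_comm u c v d⟩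

end MTInterior

theorem MTOpen.mtSat_s12 {u : M} (hu : MTOpen box u) : MTSat box u :=
  ⟨{u}, by simpa using hu, sInf_singleton.symm⟩

theorem MTLocClosed.mtBS {a : M} (ha : MTLocClosed box a) : MTBS box a := by
  obtain ⟨u, c, hu, hc, rfl⟩ := ha
  refine .inf _ _ (.sat _ hu.mtSat_s12) ?_
  simpa using MTBS.compl _ (.sat _ (MTOpen.mtSat_s12 (box := box) hc))

theorem MTBS.sSup_of_finite {S : Set M} (hS : S.Finite) (h : ∀ x ∈ S, MTBS box x) :
    MTBS box (sSup S) := by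
  induction S, hS using Set.Finite.induction_on with
  | empty => simpa using MTBS.bot
  | insert _ _ ih =>
    rw [sSup_insert]
    exact .sup _ _ (h _ (Set.mem_insert _ _)) (ih fun x hx => h x (Set.mem_insert_of_mem _ hx))

namespace MTRaneyHom

variable (hf : MTRaneyHom box box' f)
include hf

theorem monotone : Monotone f := fun a b hab => by
  rw [← inf_eq_left.mpr hab, hf.map_inf]
  exact inf_le_right

theorem map_sSup_of_finite {S : Set M} (hS : S.Finite) (h : ∀ x ∈ S, MTBS box x) :
    f (sSup S) = sSup (f '' S) := by
  induction S, hS using Set.Finite.induction_on with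
  | empty => simpa using hf.map_bot
  | @insert a T _ hT ih =>
    have hT' : ∀ x ∈ T, MTBS box x := fun x hx => h x (Set.mem_insert_of_mem _ hx)
    rw [sSup_insert, hf.bs_sup _ _ (h a (Set.mem_insert _ _)) (.sSup_of_finite hT hT'), ih hT',
      Set.image_insert_eq, sSup_insert]

end MTRaneyHom

theorem le_mtHat {x a : M} (hx : MTLocClosed box x) (hxa : x ≤ a) : f x ≤ mtHat box f a :=
  le_sSup ⟨x, ⟨hx, hxa⟩, rfl⟩

theorem mtHat_mono : Monotone (mtHat box f) := fun _ _ hab =>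
  sSup_le_sSup <| Set.image_mono fun _ hx => ⟨hx.1, hx.2.trans hab⟩

theorem mtHat_eq_self (hf : Monotone f) {x : M} (hx : MTLocClosed box x) :
    mtHat box f x = f x :=
  le_antisymm (sSup_le <| by rintro _ ⟨y, ⟨-, hyx⟩, rfl⟩; exact hf hyx) (le_mtHat hx le_rfl)

theorem mtHat_eq_sSup_mtHat (hf : Monotone f) (a : M) :
    mtHat box f a = sSup (mtHat box f '' {x | MTLocClosed box x ∧ x ≤ a}) :=
  congrArg sSup <| Set.image_congr fun _ hx => (mtHat_eq_self hf hx.1).symm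

theorem mtHat_inf (hbox : MTInterior box) (hf : ∀ a b : M, f (a ⊓ b) = f a ⊓ f b) (a b : M) :
    mtHat box f (a ⊓ b) = mtHat box f a ⊓ mtHat box f b := by
  refine le_antisymm (le_inf (mtHat_mono inf_le_left) (mtHat_mono inf_le_right)) ?_
  rw [mtHat, mtHat, sSup_inf_sSup]
  refine iSup₂_le ?_
  rintro ⟨_, _⟩ ⟨⟨x, ⟨hx, hxa⟩, rfl⟩, ⟨y, ⟨hy, hyb⟩, rfl⟩⟩
  rw [← hf]
  exact le_mtHat (hbox.mtLocClosed_inf hx hy) (inf_le_inf hxa hyb)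

theorem mtHat_sSup_of_finite (hbox : MTInterior box) (hf : MTRaneyHom box box' f) {S : Set M}
    (hS : S.Finite) (hlc : ∀ x ∈ S, MTLocClosed box x) :
    mtHat box f (sSup S) = sSup (mtHat box f '' S) := by
  refine le_antisymm (sSup_le ?_) (sSup_le ?_)
  · rintro _ ⟨z, ⟨hz, hzS⟩, rfl⟩
    have hlc_inf : ∀ s ∈ S, MTLocClosed box (z ⊓ s) := fun s hs =>
      hbox.mtLocClosed_inf hz (hlc s hs)
    have hz_eq : z = sSup ((z ⊓ ·) '' S) := by
      rw [sSup_image, ← inf_sSup_eq, inf_eq_left.mpr hzS]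
    rw [hz_eq, hf.map_sSup_of_finite (hS.image _) (by
      rintro _ ⟨s, hs, rfl⟩; exact (hlc_inf s hs).mtBS)]
    refine sSup_le ?_
    rintro _ ⟨_, ⟨s, hs, rfl⟩, rfl⟩
    exact (le_mtHat (hlc_inf s hs) inf_le_right).trans (le_sSup ⟨s, hs, rfl⟩)
  · rintro _ ⟨s, hs, rfl⟩
    exact mtHat_mono (le_sSup hs)

end

theorem stmt_12_general {M M' : Type*} [CompleteBooleanAlgebra M] [CompleteBooleanAlgebra M']
    (box : M → M) (box' : M' → M') (hbox : MTInterior box)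
    (f : M → M') (hf : MTRaneyHom box box' f) :
    MTProxHom box box' (mtHat box f) := by
  have hat_open : ∀ u : M, MTOpen box u → mtHat box f u = f u := fun _ hu =>
    mtHat_eq_self hf.monotone (hbox.mtLocClosed_of_mtOpen hu)
  refine ⟨fun u hu => ?_, ?_, fun u v hu hv => ?_, fun S hS => ?_, mtHat_inf hbox hf.map_inf,
    fun S hS hlc => mtHat_sSup_of_finite hbox hf hS hlc, mtHat_eq_sSup_mtHat hf.monotone⟩
  · rw [hat_open u hu]
    exact hf.open_map u hu
  · rw [hat_open ⊤ hbox.map_top, hf.map_top]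
  · rw [hat_open _ (hbox.mtOpen_inf hu hv), hat_open u hu, hat_open v hv, hf.map_inf]
  · rw [hat_open _ (hbox.mtOpen_sSup hS), hf.open_sSup S hS]
    exact congrArg sSup <| Set.image_congr fun x hx => (hat_open x (hS x hx)).symm

/-- if `f` is a Raney morphism then `f̂` is a proximity morphism. -/
theorem stmt_12 {M M' : Type*} [CompleteBooleanAlgebra M] [CompleteBooleanAlgebra M']
    (box : M → M) (box' : M' → M') (hbox : MTInterior box) (hbox' : MTInterior box')
    (f : M → M') (hf : MTRaneyHom box box' f) :
    MTProxHom box box' (mtHat box f) :=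
  stmt_12_general box box' hbox f hf
end

section
/- Let M and M′ be T0-algebras and let f : M → M′ be an MT-morphism, i.e., a complete Boolean algebra homomorphism (preserving arbitrary suprema, arbitrary infima, and complements) such that f(□a) ≤ □′f(a) for all a ∈ M. Then f is a Raney morphism, i.e., f satisfies conditions (R1)–(R5). -/
/-! An MT-morphism is a complete lattice homomorphism, which gives every join and meet
condition at once. It maps open elements to open ones because `f a = f (□a) ≤ □' (f a)`, hence
saturated elements to saturated ones. Finally, in a `T₀`-algebra every element is a join of
elements `s ⊓ c` of `𝓑𝓢M`, and `f` preserves that join. -/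

theorem MTOpen.map {M M' : Type*} [CompleteBooleanAlgebra M] [CompleteBooleanAlgebra M']
    {box : M → M} {box' : M' → M'} (hle : ∀ b, box' b ≤ b) {f : M → M'}
    (hf : ∀ a, f (box a) ≤ box' (f a)) {a : M} (ha : MTOpen box a) : MTOpen box' (f a) :=
  le_antisymm (hle _) ((congrArg f ha).symm.trans_le (hf a))

theorem MTSat.map {M M' : Type*} [CompleteBooleanAlgebra M] [CompleteBooleanAlgebra M']
    {box : M → M} {box' : M' → M'} {f : M → M'}
    (hsInf : ∀ S : Set M, f (sInf S) = sInf (f '' S))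
    (hopen : ∀ a, MTOpen box a → MTOpen box' (f a)) {a : M} (ha : MTSat box a) :
    MTSat box' (f a) := by
  obtain ⟨S, hS, rfl⟩ := ha
  refine ⟨f '' S, ?_, hsInf S⟩
  rintro _ ⟨s, hs, rfl⟩
  exact hopen s (hS s hs)

theorem MTClosed.mtBS {M : Type*} [CompleteBooleanAlgebra M] {box : M → M} {c : M}
    (hc : MTClosed box c) : MTBS box c :=
  compl_compl c ▸ MTBS.compl _ (MTBS.sat _ (MTOpen.mtSat hc))

theorem MTT0.eq_sSup_mtBS_le {M : Type*} [CompleteBooleanAlgebra M] {box : M → M}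
    (ht : MTT0 box) (a : M) : a = sSup {x | MTBS box x ∧ x ≤ a} := by
  refine le_antisymm ?_ (sSup_le fun x hx => hx.2)
  refine (ht a).trans_le (sSup_le_sSup ?_)
  rintro _ ⟨⟨s, c, hs, hc, rfl⟩, hle⟩
  exact ⟨MTBS.inf _ _ (MTBS.sat _ hs) hc.mtBS, hle⟩

theorem stmt_15_general {M M' : Type*} [CompleteBooleanAlgebra M] [CompleteBooleanAlgebra M']
    (box : M → M) (box' : M' → M') (hbox' : MTInterior box')
    (ht : MTT0 box)
    (f : M → M')
    (hsSup : ∀ S : Set M, f (sSup S) = sSup (f '' S))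
    (hsInf : ∀ S : Set M, f (sInf S) = sInf (f '' S))
    (hMT : ∀ a : M, f (box a) ≤ box' (f a)) :
    MTRaneyHom box box' f := by
  let F : CompleteLatticeHom M M' := ⟨⟨f, hsInf⟩, hsSup⟩
  have hopen : ∀ a, MTOpen box a → MTOpen box' (f a) := fun _ => MTOpen.map hbox'.le_self hMT
  refine ⟨fun _ => MTSat.map hsInf hopen, fun a b _ _ => map_sup F a b, map_bot F,
    fun S _ => hsInf S, hopen, map_top F, fun S _ => hsSup S, map_inf F,
    fun x y _ _ => map_sup F x y, fun a => (congrArg f (ht.eq_sSup_mtBS_le a)).trans (hsSup _)⟩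

/-- every MT-morphism between `T₀`-algebras is a Raney morphism. -/
theorem stmt_15 {M M' : Type*} [CompleteBooleanAlgebra M] [CompleteBooleanAlgebra M']
    (box : M → M) (box' : M' → M') (hbox : MTInterior box) (hbox' : MTInterior box')
    (ht : MTT0 box) (ht' : MTT0 box')
    (f : M → M')
    (hsSup : ∀ S : Set M, f (sSup S) = sSup (f '' S))
    (hsInf : ∀ S : Set M, f (sInf S) = sInf (f '' S))
    (hcompl : ∀ a : M, f aᶜ = (f a)ᶜ)
    (hMT : ∀ a : M, f (box a) ≤ box' (f a)) :
    MTRaneyHom box box' f :=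
  stmt_15_general box box' hbox' ht f hsSup hsInf hMT
end
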